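/- Let b > 0, R > 0, m ≥ 1 an integer, and let η : [R,∞) → ℝ be of class C^m with η^{(j)}(s) → 0 as s → ∞ for every j = 0,…,m. Then the unique C² solution w(s) = s ∫_s^∞ x^{−2} ( ∫_x^∞ ξ exp(−(b/4)(ξ² − x²)) η(ξ) dξ ) dx of w'' − (b/2)(s w' − w) = η with w/s → 0 and s w' − w → 0 at infinity is of class C^{m+2} on [R,∞), and w^{(j)}(s) → 0 as s → ∞ for every j = 0,…,m+2. -/

import Mathlib

/-!
Put `a = b/4` and `U_k[φ](s) = ∫_s^∞ (s/ξ)^k ξ e^{-a(ξ² - s²)} φ(ξ) dξ`. Then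
`w(s) = s ∫_s^∞ x⁻² U_0[η](x) dx`, so `w' = ∫_s^∞ x⁻² U_0[η] - U_0[η]/s` and
`w'' = η - 2a U_0[η]`; everything reduces to `U_0[η]` being `C^m` with derivatives up to order `m`
tending to `0`. Integrating by parts gives `U_k[φ]' = U_{k+1}[φ'] + (k/s)(U_k[φ] - U_{k+2}[φ])`, so
the derivative of `s^{-r} U_k[φ]` is a combination of functions of the same shape, built from `φ`
and `φ'`. Induction on the order then leaves only the bound
`|U_k[φ](s)| ≤ sup_{ξ > s} |φ(ξ)| / (2a)`, which follows from `∫_s^∞ ξ e^{-aξ²} dξ = e^{-as²}/(2a)`.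
-/

open Set Filter MeasureTheory

/-- The representation formula for the solution of `w'' - (b/2)(s w' - w) = η`. -/
noncomputable def wrep (b : ℝ) (η : ℝ → ℝ) (s : ℝ) : ℝ :=
  s * ∫ x in Set.Ioi s, (x ^ 2)⁻¹ *
    ∫ ξ in Set.Ioi x, ξ * Real.exp (-(b / 4) * (ξ ^ 2 - x ^ 2)) * η ξ

open Real Topology

theorem hasDerivAt_exp_neg_mul_sq (a x : ℝ) :
    HasDerivAt (fun ξ => exp (-(a * ξ ^ 2))) (-(2 * a * x) * exp (-(a * x ^ 2))) x := by
  have h : HasDerivAt (fun ξ => -(a * ξ ^ 2)) (-(a * (2 * x))) x := by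
    simpa using ((hasDerivAt_pow 2 x).const_mul a).fun_neg
  convert h.exp using 1
  ring

theorem tendsto_exp_neg_mul_sq {a : ℝ} (ha : 0 < a) :
    Tendsto (fun ξ => exp (-(a * ξ ^ 2))) atTop (𝓝 0) :=
  tendsto_exp_atBot.comp <| tendsto_neg_atTop_atBot.comp <|
    (tendsto_pow_atTop two_ne_zero).const_mul_atTop ha

theorem integral_Ioi_mul_exp_neg_mul_sq {a : ℝ} (ha : 0 < a) (s : ℝ) :
    ∫ ξ in Ioi s, ξ * exp (-(a * ξ ^ 2)) = exp (-(a * s ^ 2)) / (2 * a) := by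
  have hderiv (x : ℝ) :
      HasDerivAt (fun ξ => -exp (-(a * ξ ^ 2)) / (2 * a)) (x * exp (-(a * x ^ 2))) x := by
    refine ((hasDerivAt_exp_neg_mul_sq a x).fun_neg.div_const (2 * a)).congr_deriv ?_
    field_simp [ha.ne']
  have hlim : Tendsto (fun ξ => -exp (-(a * ξ ^ 2)) / (2 * a)) atTop (𝓝 0) := by
    simpa using ((tendsto_exp_neg_mul_sq ha).neg.div_const (2 * a))
  have hint : IntegrableOn (fun ξ => ξ * exp (-(a * ξ ^ 2))) (Ioi s) := by
    simpa using (integrable_mul_exp_neg_mul_sq ha).integrableOn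
  rw [integral_Ioi_of_hasDerivAt_of_tendsto' (fun x _ => hderiv x) hint hlim]
  ring

theorem inv_sq_eqOn_rpow : EqOn (fun x : ℝ => (x ^ 2)⁻¹) (fun x => x ^ (-2 : ℝ)) (Ioi 0) := by
  intro x hx
  simp [rpow_neg (le_of_lt hx)]

theorem integrableOn_Ioi_inv_sq {s : ℝ} (hs : 0 < s) :
    IntegrableOn (fun x : ℝ => (x ^ 2)⁻¹) (Ioi s) :=
  (integrableOn_Ioi_rpow_of_lt (by norm_num) hs).congr_fun
    (inv_sq_eqOn_rpow.symm.mono (Ioi_subset_Ioi hs.le)) measurableSet_Ioi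

theorem integral_Ioi_inv_sq {s : ℝ} (hs : 0 < s) : ∫ x in Ioi s, (x ^ 2)⁻¹ = s⁻¹ := by
  rw [setIntegral_congr_fun measurableSet_Ioi (inv_sq_eqOn_rpow.mono (Ioi_subset_Ioi hs.le)),
    integral_Ioi_rpow_of_lt (by norm_num) hs]
  norm_num [rpow_neg_one]

theorem hasDerivAt_inv_pow (r : ℕ) {s : ℝ} (hs : s ≠ 0) :
    HasDerivAt (fun y : ℝ => (y ^ r)⁻¹) (-r * (s ^ (r + 1))⁻¹) s := by
  refine ((hasDerivAt_pow r s).fun_inv (pow_ne_zero r hs)).congr_deriv ?_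
  rcases r with _ | r
  · simp
  · simp only [Nat.add_sub_cancel]
    field_simp
    ring

theorem hasDerivWithinAt_integral_Ioi {f : ℝ → ℝ} {R s : ℝ} (hf : ContinuousOn f (Ici R))
    (hint : IntegrableOn f (Ioi R)) (hs : s ∈ Ici R) :
    HasDerivWithinAt (fun x => ∫ t in Ioi x, f t) (-f s) (Ici R) s := by
  have hsplit : EqOn (fun x => ∫ t in Ioi x, f t)
      (fun x => (∫ t in Ioi R, f t) - ∫ t in R..x, f t) (Ici R) := fun x hx => by
    dsimp only
    rw [← intervalIntegral.integral_Ioi_sub_Ioi hint hx]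
    ring
  have hRs : IntervalIntegrable f volume R s :=
    (hf.mono Icc_subset_Ici_self).intervalIntegrable_of_Icc hs
  have hprim : HasDerivWithinAt (fun x => ∫ t in R..x, f t) (f s) (Ici R) s := by
    rcases (mem_Ici.1 hs).eq_or_lt with rfl | hlt
    · exact intervalIntegral.integral_hasDerivWithinAt_right hRs
        ((hf.mono Ioi_subset_Ici_self).stronglyMeasurableAtFilter_nhdsWithin measurableSet_Ioi _)
        ((hf _ hs).mono Ioi_subset_Ici_self)
    · exact (intervalIntegral.integral_hasDerivAt_right hRs
        ((hf.mono Ioi_subset_Ici_self).stronglyMeasurableAtFilter isOpen_Ioi _ hlt)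
        (hf.continuousAt (Ici_mem_nhds hlt))).hasDerivWithinAt
  exact (hprim.const_sub _).congr hsplit (hsplit hs)

theorem exists_forall_abs_le_of_tendsto_atTop {f : ℝ → ℝ} {R : ℝ} (hc : ContinuousOn f (Ici R))
    (h0 : Tendsto f atTop (𝓝 0)) : ∃ M, ∀ x ∈ Ici R, |f x| ≤ M := by
  obtain ⟨S, hS⟩ := eventually_atTop.1
    (h0.abs.eventually (ge_mem_nhds (show |(0 : ℝ)| < 1 by norm_num)))
  obtain ⟨C, hC⟩ := (isCompact_Icc (a := R) (b := max R S)).exists_bound_of_continuousOn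
    (hc.mono Icc_subset_Ici_self)
  refine ⟨max C 1, fun x hx => ?_⟩
  rcases le_or_gt x (max R S) with h | h
  · exact (hC x ⟨hx, h⟩).trans (le_max_left _ _)
  · exact (hS x ((le_max_right R S).trans h.le)).trans (le_max_right _ _)

theorem tendsto_zero_of_abs_le_mul_tail_bound {φ F : ℝ → ℝ} {C : ℝ} (hC : 0 ≤ C)
    (hφ : Tendsto φ atTop (𝓝 0))
    (hF : ∀ᶠ s in atTop, ∀ M, (∀ ξ ∈ Ioi s, |φ ξ| ≤ M) → |F s| ≤ C * M) :
    Tendsto F atTop (𝓝 0) := by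
  refine Metric.tendsto_nhds.2 fun ε hε => ?_
  have hδ : 0 < ε / (C + 1) := by positivity
  obtain ⟨N, hN⟩ := eventually_atTop.1 (Metric.tendsto_nhds.1 hφ _ hδ)
  filter_upwards [hF, eventually_ge_atTop N] with s hFs hs
  have hbound := hFs _ fun ξ hξ => by
    simpa using (hN ξ (hs.trans (le_of_lt hξ))).le
  rw [Real.dist_eq, sub_zero]
  calc |F s| ≤ C * (ε / (C + 1)) := hbound
    _ < ε := by rw [mul_div_assoc', div_lt_iff₀ (by positivity)]; nlinarith

noncomputable def gaussKernel (a : ℝ) (k : ℕ) (ξ : ℝ) : ℝ := ξ / ξ ^ k * exp (-(a * ξ ^ 2))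

/-- `gaussTail a k φ s = ∫_s^∞ (s/ξ)^k ξ e^{-a(ξ² - s²)} φ(ξ) dξ`, with the factor depending on `s`
pulled out of the integral so that the fundamental theorem of calculus applies. -/
noncomputable def gaussTail (a : ℝ) (k : ℕ) (φ : ℝ → ℝ) (s : ℝ) : ℝ :=
  s ^ k * exp (a * s ^ 2) * ∫ ξ in Ioi s, gaussKernel a k ξ * φ ξ

section GaussTail

variable {a : ℝ} {φ : ℝ → ℝ}

theorem continuousOn_gaussKernel (a : ℝ) (k : ℕ) : ContinuousOn (gaussKernel a k) (Ioi 0) :=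
  (continuousOn_id.div (continuousOn_pow k) fun _ hx => pow_ne_zero k (ne_of_gt hx)).mul
    (by fun_prop)

theorem hasDerivAt_gaussKernel_succ (a : ℝ) (k : ℕ) {x : ℝ} (hx : x ≠ 0) :
    HasDerivAt (gaussKernel a (k + 1))
      (-(k * gaussKernel a (k + 2) x) - 2 * a * gaussKernel a k x) x := by
  have h := ((hasDerivAt_id x).div (hasDerivAt_pow (k + 1) x) (pow_ne_zero _ hx)).mul
    (hasDerivAt_exp_neg_mul_sq a x)
  refine h.congr_deriv ?_
  simp only [gaussKernel, id, Pi.div_apply, Nat.add_sub_cancel, Nat.cast_add, Nat.cast_one]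
  field_simp
  ring

theorem norm_gaussKernel_mul_le (a : ℝ) (k : ℕ) {s ξ M : ℝ} (hs : 0 < s) (hξ : s ≤ ξ)
    (hM : |φ ξ| ≤ M) :
    ‖gaussKernel a k ξ * φ ξ‖ ≤ M / s ^ k * (ξ * exp (-(a * ξ ^ 2))) := by
  have hξ0 : 0 < ξ := hs.trans_le hξ
  have hK : gaussKernel a k ξ ≤ ξ * exp (-(a * ξ ^ 2)) / s ^ k := by
    calc gaussKernel a k ξ = ξ * exp (-(a * ξ ^ 2)) / ξ ^ k := by unfold gaussKernel; ring
      _ ≤ ξ * exp (-(a * ξ ^ 2)) / s ^ k :=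
        div_le_div_of_nonneg_left (by positivity) (by positivity) (pow_le_pow_left₀ hs.le hξ k)
  rw [norm_mul, Real.norm_eq_abs, Real.norm_eq_abs,
    abs_of_nonneg (by unfold gaussKernel; positivity : 0 ≤ gaussKernel a k ξ)]
  calc gaussKernel a k ξ * |φ ξ| ≤ ξ * exp (-(a * ξ ^ 2)) / s ^ k * M :=
        mul_le_mul hK hM (abs_nonneg _) (by positivity)
    _ = M / s ^ k * (ξ * exp (-(a * ξ ^ 2))) := by ring

theorem integrableOn_gaussKernel_mul (ha : 0 < a) (k : ℕ) {s M : ℝ} (hs : 0 < s)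
    (hφc : ContinuousOn φ (Ici s)) (hφM : ∀ ξ ∈ Ici s, |φ ξ| ≤ M) :
    IntegrableOn (fun ξ => gaussKernel a k ξ * φ ξ) (Ioi s) := by
  have hg : IntegrableOn (fun ξ => ξ * exp (-(a * ξ ^ 2))) (Ioi s) := by
    simpa using (integrable_mul_exp_neg_mul_sq ha).integrableOn
  refine (hg.const_mul (M / s ^ k)).mono' ?_ ?_
  · exact (((continuousOn_gaussKernel a k).mono (Ioi_subset_Ioi hs.le)).mul
      (hφc.mono Ioi_subset_Ici_self)).aestronglyMeasurable measurableSet_Ioi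
  · filter_upwards [ae_restrict_mem measurableSet_Ioi] with ξ hξ
    exact norm_gaussKernel_mul_le a k hs (le_of_lt hξ) (hφM ξ (mem_Ici.2 (le_of_lt hξ)))

theorem abs_gaussTail_le (ha : 0 < a) (k : ℕ) {s M : ℝ} (hs : 0 < s)
    (hφM : ∀ ξ ∈ Ioi s, |φ ξ| ≤ M) : |gaussTail a k φ s| ≤ M / (2 * a) := by
  have hint : |∫ ξ in Ioi s, gaussKernel a k ξ * φ ξ| ≤
      M / s ^ k * (exp (-(a * s ^ 2)) / (2 * a)) := by
    have hg : IntegrableOn (fun ξ => ξ * exp (-(a * ξ ^ 2))) (Ioi s) := by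
      simpa using (integrable_mul_exp_neg_mul_sq ha).integrableOn
    rw [← Real.norm_eq_abs, ← integral_Ioi_mul_exp_neg_mul_sq ha s, ← integral_const_mul]
    refine norm_integral_le_of_norm_le (hg.const_mul _) ?_
    filter_upwards [ae_restrict_mem measurableSet_Ioi] with ξ hξ
    exact norm_gaussKernel_mul_le a k hs (le_of_lt hξ) (hφM ξ hξ)
  calc |gaussTail a k φ s|
      = s ^ k * exp (a * s ^ 2) * |∫ ξ in Ioi s, gaussKernel a k ξ * φ ξ| := by
        rw [gaussTail, abs_mul, abs_of_pos (by positivity)]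
    _ ≤ s ^ k * exp (a * s ^ 2) * (M / s ^ k * (exp (-(a * s ^ 2)) / (2 * a))) := by gcongr
    _ = M / (2 * a) * exp (a * s ^ 2) * exp (-(a * s ^ 2)) := by field_simp
    _ = M / (2 * a) := by rw [mul_assoc, ← exp_add, add_neg_cancel, exp_zero, mul_one]

theorem tendsto_gaussTail (ha : 0 < a) (k : ℕ) (hφ0 : Tendsto φ atTop (𝓝 0)) :
    Tendsto (gaussTail a k φ) atTop (𝓝 0) := by
  refine tendsto_zero_of_abs_le_mul_tail_bound (C := (2 * a)⁻¹) (by positivity) hφ0 ?_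
  filter_upwards [eventually_gt_atTop 0] with s hs M hM
  simpa [div_eq_inv_mul] using abs_gaussTail_le ha k hs hM

end GaussTail

section GaussTailDeriv

variable {a R : ℝ} {φ φ' : ℝ → ℝ}

theorem hasDerivAt_pow_mul_exp_mul_sq (a : ℝ) (k : ℕ) {s : ℝ} (hs : s ≠ 0) :
    HasDerivAt (fun y => y ^ k * exp (a * y ^ 2))
      ((k / s + 2 * a * s) * (s ^ k * exp (a * s ^ 2))) s := by
  have hexp : HasDerivAt (fun y => exp (a * y ^ 2)) (exp (a * s ^ 2) * (a * (2 * s))) s := by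
    simpa using ((hasDerivAt_pow 2 s).const_mul a).exp
  refine ((hasDerivAt_pow k s).mul hexp).congr_deriv ?_
  rcases k with _ | k
  · simp only [pow_zero, zero_mul, one_mul, CharP.cast_eq_zero, zero_div, zero_add]
    ring
  · simp only [Nat.add_sub_cancel, Nat.cast_add, Nat.cast_one]
    field_simp
    ring

theorem hasDerivWithinAt_gaussTail (ha : 0 < a) (hR : 0 < R) (k : ℕ)
    (hφc : ContinuousOn φ (Ici R)) (hφ0 : Tendsto φ atTop (𝓝 0)) {s : ℝ} (hs : s ∈ Ici R) :
    HasDerivWithinAt (gaussTail a k φ)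
      ((k / s + 2 * a * s) * gaussTail a k φ s - s * φ s) (Ici R) s := by
  have hs0 : 0 < s := hR.trans_le hs
  obtain ⟨M, hM⟩ := exists_forall_abs_le_of_tendsto_atTop hφc hφ0
  have hKc : ContinuousOn (fun ξ => gaussKernel a k ξ * φ ξ) (Ici R) :=
    ((continuousOn_gaussKernel a k).mono fun x hx => hR.trans_le hx).mul hφc
  have hF := hasDerivWithinAt_integral_Ioi hKc (integrableOn_gaussKernel_mul ha k hR hφc hM) hs
  refine ((hasDerivAt_pow_mul_exp_mul_sq a k hs0.ne').hasDerivWithinAt.mul hF).congr_deriv ?_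
  simp only [gaussTail, gaussKernel]
  rw [exp_neg (a * s ^ 2)]
  field_simp
  ring

theorem continuousOn_gaussTail (ha : 0 < a) (hR : 0 < R) (k : ℕ)
    (hφc : ContinuousOn φ (Ici R)) (hφ0 : Tendsto φ atTop (𝓝 0)) :
    ContinuousOn (gaussTail a k φ) (Ici R) :=
  fun _ hs => (hasDerivWithinAt_gaussTail ha hR k hφc hφ0 hs).continuousWithinAt

theorem integral_Ioi_gaussKernel_succ_mul (ha : 0 < a) (hR : 0 < R) (k : ℕ)
    (hφc : ContinuousOn φ (Ici R)) (hφ0 : Tendsto φ atTop (𝓝 0))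
    (hφ' : ∀ x ∈ Ioi R, HasDerivAt φ (φ' x) x)
    (hφ'c : ContinuousOn φ' (Ici R)) (hφ'0 : Tendsto φ' atTop (𝓝 0)) {s : ℝ} (hs : s ∈ Ici R) :
    ∫ ξ in Ioi s, gaussKernel a (k + 1) ξ * φ' ξ =
      k * (∫ ξ in Ioi s, gaussKernel a (k + 2) ξ * φ ξ)
        + 2 * a * (∫ ξ in Ioi s, gaussKernel a k ξ * φ ξ) - gaussKernel a (k + 1) s * φ s := by
  have hs0 : 0 < s := hR.trans_le hs
  have hsub : Ici s ⊆ Ici R := Ici_subset_Ici.2 hs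
  obtain ⟨M, hM⟩ := exists_forall_abs_le_of_tendsto_atTop hφc hφ0
  obtain ⟨M', hM'⟩ := exists_forall_abs_le_of_tendsto_atTop hφ'c hφ'0
  have hint (j : ℕ) : IntegrableOn (fun ξ => gaussKernel a j ξ * φ ξ) (Ioi s) :=
    integrableOn_gaussKernel_mul ha j hs0 (hφc.mono hsub) fun ξ hξ => hM ξ (hsub hξ)
  have hint' : IntegrableOn (fun ξ => gaussKernel a (k + 1) ξ * φ' ξ) (Ioi s) :=
    integrableOn_gaussKernel_mul ha (k + 1) hs0 (hφ'c.mono hsub) fun ξ hξ => hM' ξ (hsub hξ)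
  have hint₂ : IntegrableOn (fun ξ => gaussKernel a (k + 1) ξ * φ' ξ
      - k * (gaussKernel a (k + 2) ξ * φ ξ)) (Ioi s) := hint'.sub ((hint (k + 2)).const_mul _)
  have hcont : ContinuousWithinAt (fun ξ => gaussKernel a (k + 1) ξ * φ ξ) (Ici s) s :=
    ((continuousOn_gaussKernel a (k + 1)).continuousAt
      (Ioi_mem_nhds hs0)).continuousWithinAt.mul ((hφc s hs).mono hsub)
  have hderiv : ∀ x ∈ Ioi s, HasDerivAt (fun ξ => gaussKernel a (k + 1) ξ * φ ξ)
      (gaussKernel a (k + 1) x * φ' x - k * (gaussKernel a (k + 2) x * φ x)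
        - 2 * a * (gaussKernel a k x * φ x)) x := fun x hx =>
    ((hasDerivAt_gaussKernel_succ a k (hs0.trans hx).ne').mul
      (hφ' x ((mem_Ici.1 hs).trans_lt hx))).congr_deriv (by ring)
  have hlim : Tendsto (fun ξ => gaussKernel a (k + 1) ξ * φ ξ) atTop (𝓝 0) := by
    have h := ((tendsto_inv_atTop_zero.pow k).mul (tendsto_exp_neg_mul_sq ha)).mul hφ0
    rw [mul_zero] at h
    refine h.congr' ?_
    filter_upwards [eventually_gt_atTop 0] with ξ hξ
    simp only [gaussKernel, inv_pow]
    field_simp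
    ring
  have hFTC := integral_Ioi_of_hasDerivAt_of_tendsto hcont hderiv
    (hint₂.sub ((hint k).const_mul _)) hlim
  rw [integral_sub hint₂ ((hint k).const_mul _), integral_sub hint' ((hint (k + 2)).const_mul _),
    integral_const_mul, integral_const_mul] at hFTC
  linarith

theorem gaussTail_succ_eq (ha : 0 < a) (hR : 0 < R) (k : ℕ)
    (hφc : ContinuousOn φ (Ici R)) (hφ0 : Tendsto φ atTop (𝓝 0))
    (hφ' : ∀ x ∈ Ioi R, HasDerivAt φ (φ' x) x)
    (hφ'c : ContinuousOn φ' (Ici R)) (hφ'0 : Tendsto φ' atTop (𝓝 0)) {s : ℝ} (hs : s ∈ Ici R) :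
    gaussTail a (k + 1) φ' s =
      2 * a * s * gaussTail a k φ s + k / s * gaussTail a (k + 2) φ s - s * φ s := by
  have hs0 : s ≠ 0 := (hR.trans_le hs).ne'
  rw [gaussTail, gaussTail, gaussTail,
    integral_Ioi_gaussKernel_succ_mul ha hR k hφc hφ0 hφ' hφ'c hφ'0 hs, gaussKernel,
    exp_neg (a * s ^ 2)]
  field_simp
  ring

theorem hasDerivWithinAt_inv_pow_mul_gaussTail (ha : 0 < a) (hR : 0 < R) (k r : ℕ)
    (hφc : ContinuousOn φ (Ici R)) (hφ0 : Tendsto φ atTop (𝓝 0))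
    (hφ' : ∀ x ∈ Ioi R, HasDerivAt φ (φ' x) x)
    (hφ'c : ContinuousOn φ' (Ici R)) (hφ'0 : Tendsto φ' atTop (𝓝 0)) {s : ℝ} (hs : s ∈ Ici R) :
    HasDerivWithinAt (fun y => (y ^ r)⁻¹ * gaussTail a k φ y)
      ((s ^ r)⁻¹ * gaussTail a (k + 1) φ' s + (k - r) * ((s ^ (r + 1))⁻¹ * gaussTail a k φ s)
        - k * ((s ^ (r + 1))⁻¹ * gaussTail a (k + 2) φ s)) (Ici R) s := by
  have hs0 : 0 < s := hR.trans_le hs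
  refine ((hasDerivAt_inv_pow r hs0.ne').hasDerivWithinAt.mul
    (hasDerivWithinAt_gaussTail ha hR k hφc hφ0 hs)).congr_deriv ?_
  rw [gaussTail_succ_eq ha hR k hφc hφ0 hφ' hφ'c hφ'0 hs]
  field_simp
  ring

theorem tendsto_inv_pow_mul_gaussTail (ha : 0 < a) (k r : ℕ) (hφ0 : Tendsto φ atTop (𝓝 0)) :
    Tendsto (fun s => (s ^ r)⁻¹ * gaussTail a k φ s) atTop (𝓝 0) := by
  simpa using (tendsto_inv_atTop_zero.pow r).mul (tendsto_gaussTail ha k hφ0)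

end GaussTailDeriv

def DecaysWithDerivs (R : ℝ) (n : ℕ) (f : ℝ → ℝ) : Prop :=
  ContDiffOn ℝ n f (Ici R) ∧ ∀ j ≤ n, Tendsto (iteratedDerivWithin j f (Ici R)) atTop (𝓝 0)

namespace DecaysWithDerivs

variable {R : ℝ} {n : ℕ} {f g : ℝ → ℝ}

theorem zero_iff : DecaysWithDerivs R 0 f ↔ ContinuousOn f (Ici R) ∧ Tendsto f atTop (𝓝 0) := by
  simp [DecaysWithDerivs, contDiffOn_zero]

theorem continuousOn (hf : DecaysWithDerivs R n f) : ContinuousOn f (Ici R) :=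
  hf.1.continuousOn

theorem tendsto (hf : DecaysWithDerivs R n f) : Tendsto f atTop (𝓝 0) := by
  simpa using hf.2 0 n.zero_le

theorem of_succ (hf : DecaysWithDerivs R (n + 1) f) : DecaysWithDerivs R n f :=
  ⟨hf.1.of_le (by exact_mod_cast n.le_succ), fun j hj => hf.2 j (hj.trans n.le_succ)⟩

theorem derivWithin (hf : DecaysWithDerivs R (n + 1) f) :
    DecaysWithDerivs R n (_root_.derivWithin f (Ici R)) := by
  refine ⟨((contDiffOn_succ_iff_derivWithin (uniqueDiffOn_Ici R)).1 ?_).2.2, fun j hj => ?_⟩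
  · exact_mod_cast hf.1
  · simpa [iteratedDerivWithin_succ'] using hf.2 (j + 1) (by omega)

theorem hasDerivAt (hf : DecaysWithDerivs R (n + 1) f) {x : ℝ} (hx : x ∈ Ioi R) :
    HasDerivAt f (_root_.derivWithin f (Ici R) x) x := by
  have hd : DifferentiableAt ℝ f x :=
    ((hf.1.differentiableOn (by simp)) x (mem_Ici.2 (le_of_lt hx))).differentiableAt
      (Ici_mem_nhds hx)
  rw [derivWithin_of_mem_nhds (Ici_mem_nhds hx)]
  exact hd.hasDerivAt

theorem of_hasDerivWithinAt {f' : ℝ → ℝ}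
    (hderiv : ∀ s ∈ Ici R, HasDerivWithinAt f (f' s) (Ici R) s)
    (hf : Tendsto f atTop (𝓝 0)) (hf' : DecaysWithDerivs R n f') :
    DecaysWithDerivs R (n + 1) f := by
  have heq : EqOn (_root_.derivWithin f (Ici R)) f' (Ici R) := fun s hs =>
    (hderiv s hs).derivWithin (uniqueDiffOn_Ici R s hs)
  refine ⟨?_, fun j hj => ?_⟩
  · have h : ContDiffOn ℝ (n + 1) f (Ici R) :=
      (contDiffOn_succ_iff_derivWithin (uniqueDiffOn_Ici R)).2
        ⟨fun s hs => (hderiv s hs).differentiableWithinAt, by simp, hf'.1.congr heq⟩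
    exact_mod_cast h
  · rcases j with _ | j
    · simpa using hf
    · rw [iteratedDerivWithin_succ']
      refine (hf'.2 j (by omega)).congr' ?_
      filter_upwards [Ici_mem_atTop R] with s hs
      exact (iteratedDerivWithin_congr heq hs).symm

theorem add (hf : DecaysWithDerivs R n f) (hg : DecaysWithDerivs R n g) :
    DecaysWithDerivs R n (fun s => f s + g s) := by
  refine ⟨hf.1.add hg.1, fun j hj => ?_⟩
  have h := (hf.2 j hj).add (hg.2 j hj)
  rw [add_zero] at h
  refine h.congr' ?_
  filter_upwards [Ici_mem_atTop R] with s hs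
  exact (iteratedDerivWithin_fun_add hs (uniqueDiffOn_Ici R)
    ((hf.1.of_le (by exact_mod_cast hj)) s hs) ((hg.1.of_le (by exact_mod_cast hj)) s hs)).symm

theorem sub (hf : DecaysWithDerivs R n f) (hg : DecaysWithDerivs R n g) :
    DecaysWithDerivs R n (fun s => f s - g s) := by
  refine ⟨hf.1.sub hg.1, fun j hj => ?_⟩
  have h := (hf.2 j hj).sub (hg.2 j hj)
  rw [sub_zero] at h
  refine h.congr' ?_
  filter_upwards [Ici_mem_atTop R] with s hs
  exact (iteratedDerivWithin_sub hs (uniqueDiffOn_Ici R)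
    ((hf.1.of_le (by exact_mod_cast hj)) s hs) ((hg.1.of_le (by exact_mod_cast hj)) s hs)).symm

theorem const_mul (c : ℝ) (hf : DecaysWithDerivs R n f) :
    DecaysWithDerivs R n (fun s => c * f s) :=
  ⟨contDiffOn_const.mul hf.1, fun j hj => by
    have h := (hf.2 j hj).const_mul c
    rw [mul_zero] at h
    exact h.congr fun x => (iteratedDerivWithin_const_mul_field c f).symm⟩

end DecaysWithDerivs

theorem DecaysWithDerivs.inv_pow_mul_gaussTail {a R : ℝ} {n : ℕ} {φ : ℝ → ℝ} (ha : 0 < a)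
    (hR : 0 < R) (hφ : DecaysWithDerivs R n φ) (k r : ℕ) :
    DecaysWithDerivs R n (fun s => (s ^ r)⁻¹ * gaussTail a k φ s) := by
  induction n generalizing φ k r with
  | zero =>
    obtain ⟨hφc, hφ0⟩ := DecaysWithDerivs.zero_iff.1 hφ
    refine DecaysWithDerivs.zero_iff.2 ⟨?_, tendsto_inv_pow_mul_gaussTail ha k r hφ0⟩
    exact ((continuousOn_pow r).inv₀ fun s hs => pow_ne_zero r (hR.trans_le hs).ne').mul
      (continuousOn_gaussTail ha hR k hφc hφ0)
  | succ n ih =>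
    have hφ' := hφ.derivWithin
    refine .of_hasDerivWithinAt (fun s hs => hasDerivWithinAt_inv_pow_mul_gaussTail ha hR k r
      hφ.continuousOn hφ.tendsto (fun x hx => hφ.hasDerivAt hx) hφ'.continuousOn hφ'.tendsto hs)
      (tendsto_inv_pow_mul_gaussTail ha k r hφ.tendsto) ?_
    exact ((ih hφ' (k + 1) r).add ((ih hφ.of_succ k (r + 1)).const_mul _)).sub
      ((ih hφ.of_succ (k + 2) (r + 1)).const_mul _)

noncomputable def invSqTail (g : ℝ → ℝ) (s : ℝ) : ℝ := ∫ x in Ioi s, (x ^ 2)⁻¹ * g x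

section InvSqTail

variable {R : ℝ} {g : ℝ → ℝ}

theorem abs_invSqTail_le {s M : ℝ} (hs : 0 < s) (hM : ∀ x ∈ Ioi s, |g x| ≤ M) :
    |invSqTail g s| ≤ M / s := by
  rw [invSqTail, ← Real.norm_eq_abs, div_eq_mul_inv, ← integral_Ioi_inv_sq hs,
    ← integral_const_mul]
  refine norm_integral_le_of_norm_le ((integrableOn_Ioi_inv_sq hs).const_mul M) ?_
  filter_upwards [ae_restrict_mem measurableSet_Ioi] with x hx
  have hx0 : 0 < x := hs.trans hx
  rw [norm_mul, Real.norm_eq_abs, Real.norm_eq_abs, abs_of_pos (by positivity), mul_comm]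
  exact mul_le_mul_of_nonneg_right (hM x hx) (by positivity)

theorem hasDerivWithinAt_invSqTail (hR : 0 < R) (hgc : ContinuousOn g (Ici R))
    (hg0 : Tendsto g atTop (𝓝 0)) {s : ℝ} (hs : s ∈ Ici R) :
    HasDerivWithinAt (invSqTail g) (-((s ^ 2)⁻¹ * g s)) (Ici R) s := by
  obtain ⟨M, hM⟩ := exists_forall_abs_le_of_tendsto_atTop hgc hg0
  have hc : ContinuousOn (fun x => (x ^ 2)⁻¹ * g x) (Ici R) :=
    ((continuousOn_pow 2).inv₀ fun x hx => pow_ne_zero 2 (hR.trans_le hx).ne').mul hgc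
  refine hasDerivWithinAt_integral_Ioi hc
    (((integrableOn_Ioi_inv_sq hR).const_mul M).mono'
      ((hc.mono Ioi_subset_Ici_self).aestronglyMeasurable measurableSet_Ioi) ?_) hs
  filter_upwards [ae_restrict_mem measurableSet_Ioi] with x hx
  have hx0 : 0 < x := hR.trans hx
  rw [norm_mul, Real.norm_eq_abs, Real.norm_eq_abs, abs_of_pos (by positivity), mul_comm]
  exact mul_le_mul_of_nonneg_right (hM x (mem_Ici.2 (le_of_lt hx))) (by positivity)

theorem hasDerivWithinAt_mul_invSqTail (hR : 0 < R) (hgc : ContinuousOn g (Ici R))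
    (hg0 : Tendsto g atTop (𝓝 0)) {s : ℝ} (hs : s ∈ Ici R) :
    HasDerivWithinAt (fun y => y * invSqTail g y) (invSqTail g s - s⁻¹ * g s) (Ici R) s := by
  have hs0 : s ≠ 0 := (hR.trans_le hs).ne'
  refine ((hasDerivWithinAt_id s _).mul (hasDerivWithinAt_invSqTail hR hgc hg0 hs)).congr_deriv ?_
  simp only [id]
  field_simp
  ring

theorem tendsto_mul_invSqTail (hg0 : Tendsto g atTop (𝓝 0)) :
    Tendsto (fun s => s * invSqTail g s) atTop (𝓝 0) := by
  refine tendsto_zero_of_abs_le_mul_tail_bound zero_le_one hg0 ?_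
  filter_upwards [eventually_gt_atTop 0] with s hs M hM
  calc |s * invSqTail g s| = s * |invSqTail g s| := by rw [abs_mul, abs_of_pos hs]
    _ ≤ s * (M / s) := by gcongr; exact abs_invSqTail_le hs hM
    _ = 1 * M := by field_simp

theorem tendsto_invSqTail (hg0 : Tendsto g atTop (𝓝 0)) :
    Tendsto (invSqTail g) atTop (𝓝 0) := by
  have h := tendsto_inv_atTop_zero.mul (tendsto_mul_invSqTail hg0)
  rw [zero_mul] at h
  refine h.congr' ?_
  filter_upwards [eventually_gt_atTop 0] with s hs
  field_simp

end InvSqTail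

theorem wrep_eq_mul_invSqTail (b : ℝ) (η : ℝ → ℝ) :
    wrep b η = fun s => s * invSqTail (gaussTail (b / 4) 0 η) s := by
  funext s
  simp only [wrep, invSqTail, gaussTail, gaussKernel, pow_zero, div_one, one_mul]
  congr 1
  refine integral_congr_ae (Eventually.of_forall fun x => ?_)
  dsimp only
  congr 1
  rw [← integral_const_mul]
  congr 1 with ξ
  rw [show -(b / 4) * (ξ ^ 2 - x ^ 2) = b / 4 * x ^ 2 + -(b / 4 * ξ ^ 2) by ring, exp_add]
  ring

theorem hasDerivWithinAt_invSqTail_sub_inv_mul_gaussTail {a R : ℝ} {η : ℝ → ℝ} (ha : 0 < a)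
    (hR : 0 < R) (hηc : ContinuousOn η (Ici R)) (hη0 : Tendsto η atTop (𝓝 0)) {s : ℝ}
    (hs : s ∈ Ici R) :
    HasDerivWithinAt (fun y => invSqTail (gaussTail a 0 η) y - y⁻¹ * gaussTail a 0 η y)
      (η s - 2 * a * gaussTail a 0 η s) (Ici R) s := by
  have hs0 : s ≠ 0 := (hR.trans_le hs).ne'
  refine ((hasDerivWithinAt_invSqTail hR (continuousOn_gaussTail ha hR 0 hηc hη0)
    (tendsto_gaussTail ha 0 hη0) hs).sub ((hasDerivAt_inv hs0).hasDerivWithinAt.mul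
      (hasDerivWithinAt_gaussTail ha hR 0 hηc hη0 hs))).congr_deriv ?_
  field_simp
  ring

theorem higher_regularity_of_solution_general
    (b R : ℝ) (m : ℕ) (hb : 0 < b) (hR : 0 < R) (η : ℝ → ℝ)
    (hη : ContDiffOn ℝ m η (Set.Ici R))
    (hη0 : ∀ j ≤ m,
      Filter.Tendsto (iteratedDerivWithin j η (Set.Ici R)) Filter.atTop (nhds 0)) :
    ContDiffOn ℝ (m + 2) (wrep b η) (Set.Ici R) ∧
    ∀ j ≤ m + 2,
      Filter.Tendsto (iteratedDerivWithin j (wrep b η) (Set.Ici R)) Filter.atTop (nhds 0) := by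
  have ha : 0 < b / 4 := by positivity
  have hηd : DecaysWithDerivs R m η := ⟨hη, hη0⟩
  have hU : DecaysWithDerivs R m (gaussTail (b / 4) 0 η) := by
    simpa using hηd.inv_pow_mul_gaussTail ha hR 0 0
  have hw' : DecaysWithDerivs R (m + 1)
      (fun s => invSqTail (gaussTail (b / 4) 0 η) s - s⁻¹ * gaussTail (b / 4) 0 η s) :=
    .of_hasDerivWithinAt (fun s hs =>
        hasDerivWithinAt_invSqTail_sub_inv_mul_gaussTail ha hR hηd.continuousOn hηd.tendsto hs)
      (by simpa using (tendsto_invSqTail hU.tendsto).sub (tendsto_inv_atTop_zero.mul hU.tendsto))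
      (hηd.sub (hU.const_mul _))
  have hw : DecaysWithDerivs R (m + 1 + 1) (wrep b η) := by
    rw [wrep_eq_mul_invSqTail]
    exact .of_hasDerivWithinAt
      (fun s hs => hasDerivWithinAt_mul_invSqTail hR hU.continuousOn hU.tendsto hs)
      (tendsto_mul_invSqTail hU.tendsto) hw'
  exact ⟨by exact_mod_cast hw.1, hw.2⟩

/-- If `η ∈ C^m([R,∞))` with `η^{(j)} → 0` at infinity for `j = 0,…,m`,
then the solution `w` of the Cauchy problem given by the representation formula is of class
`C^{m+2}` on `[R,∞)` and `w^{(j)} → 0` at infinity for every `j = 0,…,m+2`. -/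
theorem higher_regularity_of_solution
    (b R : ℝ) (m : ℕ) (hb : 0 < b) (hR : 0 < R) (hm : 1 ≤ m) (η : ℝ → ℝ)
    (hη : ContDiffOn ℝ m η (Set.Ici R))
    (hη0 : ∀ j ≤ m,
      Filter.Tendsto (iteratedDerivWithin j η (Set.Ici R)) Filter.atTop (nhds 0)) :
    ContDiffOn ℝ (m + 2) (wrep b η) (Set.Ici R) ∧
    ∀ j ≤ m + 2,
      Filter.Tendsto (iteratedDerivWithin j (wrep b η) (Set.Ici R)) Filter.atTop (nhds 0) :=
  higher_regularity_of_solution_general b R m hb hR η hη hη0
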